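/- arXiv:2206.04837 — 2 statements merged into one kernel-verified Lean document; each statement's English description precedes it below -/
import Mathlib

section
/- For all real t and all reals x, y, z ≥ 0, the symmetric quartic f_t := S₄ - (t+1)T_{3,1} + (t²+2t)S_{2,2} - (t²-1)U·S₁ is nonnegative, where S₄ = x⁴+y⁴+z⁴, T_{3,1} = x³y+y³z+z³x+xy³+yz³+zx³, S_{2,2} = x²y²+y²z²+z²x², U = xyz, S₁ = x+y+z. -/
/-- The symmetric quartic `f_t = S₄ - (t+1)T_{3,1} + (t²+2t)S_{2,2} - (t²-1)U·S₁`. -/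
def ft (t x y z : ℝ) : ℝ :=
  (x^4 + y^4 + z^4)
    - (t+1) * (x^3*y + y^3*z + z^3*x + x*y^3 + y*z^3 + z*x^3)
    + (t^2 + 2*t) * (x^2*y^2 + y^2*z^2 + z^2*x^2)
    - (t^2 - 1) * (x*y*z) * (x + y + z)

/-- Schur's inequality of degree 2. -/
lemma schur2 (x y z : ℝ) (hx : 0 ≤ x) (hy : 0 ≤ y) (hz : 0 ≤ z) :
    0 ≤ x^4 + y^4 + z^4 - (x^3*y + y^3*z + z^3*x + x*y^3 + y*z^3 + z*x^3)
      + (x*y*z) * (x + y + z) := by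
  nlinarith [sq_nonneg (x-y), sq_nonneg (y-z), sq_nonneg (z-x), sq_nonneg (x+y-z),
    sq_nonneg (y+z-x), sq_nonneg (z+x-y), mul_nonneg hx hy, mul_nonneg hy hz,
    mul_nonneg hz hx, sq_nonneg (x*(x-y) + z*(z-y)), sq_nonneg (y*(y-z) + x*(x-z)),
    sq_nonneg (z*(z-x) + y*(y-x)), mul_nonneg (mul_nonneg hx hy) hz]

theorem ft_nonneg (t x y z : ℝ) (hx : 0 ≤ x) (hy : 0 ≤ y) (hz : 0 ≤ z) :
    0 ≤ ft t x y z := by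
  set A : ℝ := x^2*y^2 + y^2*z^2 + z^2*x^2 - (x*y*z) * (x + y + z) with hAdef
  set B : ℝ := 2*(x^2*y^2 + y^2*z^2 + z^2*x^2)
      - (x^3*y + y^3*z + z^3*x + x*y^3 + y*z^3 + z*x^3) with hBdef
  set C : ℝ := x^4 + y^4 + z^4 - (x^3*y + y^3*z + z^3*x + x*y^3 + y*z^3 + z*x^3)
      + (x*y*z) * (x + y + z) with hCdef
  have hf : ft t x y z = A * t^2 + B * t + C := by
    rw [hAdef, hBdef, hCdef, ft]; ring
  have hC : 0 ≤ C := schur2 x y z hx hy hz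
  have hA : 0 ≤ A := by
    rw [hAdef]
    nlinarith [sq_nonneg (x*(y-z)), sq_nonneg (y*(z-x)), sq_nonneg (z*(x-y))]
  have key : 4 * A * C - B^2 = 3 * ((x-y)*(y-z)*(z-x)*(x+y+z))^2 := by
    rw [hAdef, hBdef, hCdef]; ring
  rw [hf]
  rcases eq_or_lt_of_le hA with hA0 | hApos
  · have hB : B = 0 := by
      nlinarith [sq_nonneg B, sq_nonneg ((x-y)*(y-z)*(z-x)*(x+y+z))]
    rw [← hA0, hB]; simpa using hC
  · nlinarith [sq_nonneg (2*A*t + B), sq_nonneg ((x-y)*(y-z)*(z-x)*(x+y+z)),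
      mul_pos hApos hApos]
end

section
/- Let f(x) = x³ + ax² + bx + c with a, b, c real. Then f(x) ≥ 0 for all x ≥ 0 if and only if one of the following holds: (1) a ≥ 0, b ≥ 0, c ≥ 0; (2) c = 0 and a² - 4b ≤ 0; (3) c > 0 and a²b² - 4b³ - 4a³c + 18abc - 27c² ≤ 0. -/
set_option maxHeartbeats 1000000

theorem cubic_nonneg_on_nonneg_iff (a b c : ℝ) :
    (∀ x : ℝ, 0 ≤ x → 0 ≤ x^3 + a*x^2 + b*x + c) ↔
      ((0 ≤ a ∧ 0 ≤ b ∧ 0 ≤ c) ∨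
       (c = 0 ∧ a^2 - 4*b ≤ 0) ∨
       (0 < c ∧ a^2*b^2 - 4*b^3 - 4*a^3*c + 18*a*b*c - 27*c^2 ≤ 0)) := by
  constructor
  · intro h
    have hc : 0 ≤ c := by simpa using h 0 le_rfl
    rcases eq_or_lt_of_le hc with hc0 | hcpos
    · -- c = 0
      have hcc : c = 0 := hc0.symm
      subst hcc
      have hb : 0 ≤ b := by
        by_contra hbneg
        push_neg at hbneg
        have hA0 : 0 ≤ |a| := abs_nonneg a
        have haA : a ≤ |a| := le_abs_self a
        have hd : (0:ℝ) < 1 - b + |a| := by linarith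
        set t := -b / (1 - b + |a|) with htdef
        have ht : 0 < t := div_pos (by linarith) hd
        have htd : t * (1 - b + |a|) = -b := by
          rw [htdef]; field_simp
        have h1 := h t ht.le
        nlinarith [mul_pos ht ht, mul_pos (mul_pos ht ht) ht,
          mul_le_mul_of_nonneg_left haA (mul_pos ht ht).le,
          mul_pos ht hd]
      by_cases ha : 0 ≤ a
      · exact Or.inl ⟨ha, hb, le_rfl⟩
      · push_neg at ha
        refine Or.inr (Or.inl ⟨rfl, ?_⟩)
        have h2 := h (-a/2) (by linarith)
        nlinarith [h2]
    · -- c > 0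
      by_cases hab : 0 ≤ a ∧ 0 ≤ b
      · exact Or.inl ⟨hab.1, hab.2, hc⟩
      · refine Or.inr (Or.inr ⟨hcpos, ?_⟩)
        by_contra hD
        push_neg at hD
        have h3b : 3*b < a^2 := by
          by_contra h3b
          push_neg at h3b
          nlinarith [mul_nonneg (mul_nonneg (by linarith : (0:ℝ) ≤ 3*b - a^2)
            (by linarith : (0:ℝ) ≤ 3*b - a^2)) (by linarith : (0:ℝ) ≤ 3*b - a^2),
            sq_nonneg (2*a^3 - 9*a*b + 27*c)]
        obtain ⟨s, hs0, hs2⟩ : ∃ s : ℝ, 0 < s ∧ s^2 = a^2 - 3*b :=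
          ⟨Real.sqrt (a^2 - 3*b), Real.sqrt_pos.2 (by linarith),
            Real.sq_sqrt (by linarith)⟩
        have hb' : b = (a^2 - s^2)/3 := by linarith
        subst hb'
        by_cases hx2 : 0 ≤ (-a + s)/3
        · have h2 := h ((-a+s)/3) hx2
          have key : 27 * ((((-a-s)/3)^3 + a*((-a-s)/3)^2 + ((a^2 - s^2)/3)*((-a-s)/3) + c) * (((-a+s)/3)^3 + a*((-a+s)/3)^2 + ((a^2 - s^2)/3)*((-a+s)/3) + c)) = -(a^2*((a^2 - s^2)/3)^2 - 4*((a^2 - s^2)/3)^3 - 4*a^3*c + 18*a*((a^2 - s^2)/3)*c - 27*c^2) := by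
            ring
          have hdiff : (((-a-s)/3)^3 + a*((-a-s)/3)^2 + ((a^2 - s^2)/3)*((-a-s)/3) + c) - (((-a+s)/3)^3 + a*((-a+s)/3)^2 + ((a^2 - s^2)/3)*((-a+s)/3) + c) = 4*s^3/27 := by
            ring
          have hF1pos : 0 ≤ (((-a-s)/3)^3 + a*((-a-s)/3)^2 + ((a^2 - s^2)/3)*((-a-s)/3) + c) := by
            nlinarith [hdiff, h2, mul_pos (mul_pos hs0 hs0) hs0]
          nlinarith [key, hD, mul_nonneg hF1pos h2]
        · push_neg at hx2
          have has : s < a := by linarith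
          exact hab ⟨by linarith, by nlinarith [hs0, has]⟩
  · rintro (⟨ha, hb, hc⟩ | ⟨hc, hab⟩ | ⟨hc, hD⟩) x hx
    · nlinarith [mul_nonneg (mul_nonneg hx hx) hx,
        mul_nonneg (mul_nonneg ha hx) hx, mul_nonneg hb hx]
    · subst hc
      nlinarith [mul_nonneg hx (sq_nonneg (2*x+a)),
        mul_nonneg hx (by linarith : (0:ℝ) ≤ 4*b - a^2)]
    · by_cases h3b : a^2 ≤ 3*b
      · nlinarith [mul_nonneg hx (sq_nonneg (2*x+a)),
          mul_nonneg hx (by nlinarith [sq_nonneg a] : (0:ℝ) ≤ 4*b - a^2)]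
      · push_neg at h3b
        obtain ⟨s, hs0, hs2⟩ : ∃ s : ℝ, 0 < s ∧ s^2 = a^2 - 3*b :=
          ⟨Real.sqrt (a^2 - 3*b), Real.sqrt_pos.2 (by linarith),
            Real.sq_sqrt (by linarith)⟩
        have hb' : b = (a^2 - s^2)/3 := by linarith
        subst hb'
        by_cases hx2 : 0 ≤ (-a + s)/3
        · have hF1 : c ≤ (((-a-s)/3)^3 + a*((-a-s)/3)^2 + ((a^2 - s^2)/3)*((-a-s)/3) + c) := by
            have hid : (((-a-s)/3)^3 + a*((-a-s)/3)^2 + ((a^2 - s^2)/3)*((-a-s)/3) + c) - c = ((-a-s)/3)^2 * ((2*s - a)/3) := by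
              ring
            nlinarith [hid, mul_nonneg (sq_nonneg ((-a-s)/3)) (by linarith : (0:ℝ) ≤ (2*s - a)/3)]
          have key : 27 * ((((-a-s)/3)^3 + a*((-a-s)/3)^2 + ((a^2 - s^2)/3)*((-a-s)/3) + c) * (((-a+s)/3)^3 + a*((-a+s)/3)^2 + ((a^2 - s^2)/3)*((-a+s)/3) + c)) = -(a^2*((a^2 - s^2)/3)^2 - 4*((a^2 - s^2)/3)^3 - 4*a^3*c + 18*a*((a^2 - s^2)/3)*c - 27*c^2) := by
            ring
          have hF2 : 0 ≤ (((-a+s)/3)^3 + a*((-a+s)/3)^2 + ((a^2 - s^2)/3)*((-a+s)/3) + c) := by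
            by_contra hF2neg
            push_neg at hF2neg
            nlinarith [key, hD, mul_pos (lt_of_lt_of_le hc hF1) (neg_pos.2 hF2neg)]
          by_cases hA : 0 ≤ x + (a + 2*s)/3
          · have hid2 : (x^3 + a*x^2 + ((a^2 - s^2)/3)*x + c) - (((-a+s)/3)^3 + a*((-a+s)/3)^2 + ((a^2 - s^2)/3)*((-a+s)/3) + c) = (x - (-a+s)/3)^2 * (x + (a + 2*s)/3) := by
              ring
            nlinarith [hF2, mul_nonneg (sq_nonneg (x - (-a+s)/3)) hA, hid2]
          · push_neg at hA
            have ha4 : a^2 < 4*((a^2 - s^2)/3) := by nlinarith [hA, hx, hs0]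
            nlinarith [mul_nonneg hx (sq_nonneg (2*x+a)),
              mul_nonneg hx (by linarith : (0:ℝ) ≤ 4*((a^2 - s^2)/3) - a^2), hc]
        · push_neg at hx2
          have has : s < a := by linarith
          have hbpos : (0:ℝ) ≤ (a^2 - s^2)/3 := by nlinarith
          nlinarith [mul_nonneg (mul_nonneg hx hx) hx,
            mul_nonneg (mul_nonneg (by linarith : (0:ℝ) ≤ a) hx) hx,
            mul_nonneg hbpos hx, hc.le]
end
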